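/- Suppose there are short exact sequences 0 → M → N → X → 0 and 0 → Y → P → N → 0 of Z-graded k[t]-modules with t^{2ε}X = 0 and t^{2ε}Y = 0 (M is 2ε-left interleaved with N and P is 2ε-right interleaved with N). Then M and P are 2ε-interleaved. -/
import Mathlib


/-- A `ℤ`-graded `k[t]`-module, i.e. a persistence module over `ℤ`. -/
structure PersMod (k : Type*) [Field k] where
  V : ℤ → Type*
  [grp : ∀ j, AddCommGroup (V j)]
  [mod : ∀ j, Module k (V j)]
  map : ∀ {i j : ℤ}, i ≤ j → (V i →ₗ[k] V j)
  map_id : ∀ i : ℤ, map (le_refl i) = LinearMap.id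
  map_comp : ∀ {i j l : ℤ} (hij : i ≤ j) (hjl : j ≤ l),
    (map hjl).comp (map hij) = map (hij.trans hjl)

attribute [instance] PersMod.grp PersMod.mod

variable {k : Type*} [Field k]

/-- An `ε`-morphism of persistence modules (raises degree by `ε`). -/
structure EHom (M N : PersMod k) (ε : ℕ) where
  f : ∀ j : ℤ, M.V j →ₗ[k] N.V (j + ε)
  natural : ∀ {i j : ℤ} (h : i ≤ j),
    (f j).comp (M.map h) = (N.map (by omega : (i : ℤ) + (ε : ℤ) ≤ j + (ε : ℤ))).comp (f i)

/-- An `ε`-interleaving: a pair of `ε`-morphisms whose composites in both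
orders are multiplication by `t^{2ε}` (the structure maps shifting by `2ε`). -/
structure Interleaving (M N : PersMod k) (ε : ℕ) where
  φ : EHom M N ε
  ψ : EHom N M ε
  comp_φψ : ∀ j : ℤ, (ψ.f (j + ε)).comp (φ.f j)
      = M.map (by omega : (j : ℤ) ≤ j + (ε : ℤ) + (ε : ℤ))
  comp_ψφ : ∀ j : ℤ, (φ.f (j + ε)).comp (ψ.f j)
      = N.map (by omega : (j : ℤ) ≤ j + (ε : ℤ) + (ε : ℤ))

/-- `t^{2ε} · M = 0`. -/
def IsTrivial (M : PersMod k) (ε : ℕ) : Prop :=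
  ∀ j : ℤ, (M.map (by omega : (j : ℤ) ≤ j + 2 * (ε : ℤ))) = 0

/-- A degree-preserving morphism of persistence modules. -/
structure Hom0 (M N : PersMod k) where
  f : ∀ j : ℤ, M.V j →ₗ[k] N.V j
  natural : ∀ {i j : ℤ} (h : i ≤ j), (f j).comp (M.map h) = (N.map h).comp (f i)

/-- `0 → M → N → P → 0` is a short exact sequence of degree-preserving morphisms. -/
def IsShortExact {M N P : PersMod k} (f : Hom0 M N) (g : Hom0 N P) : Prop :=
  (∀ j : ℤ, Function.Injective (f.f j)) ∧ (∀ j : ℤ, Function.Surjective (g.f j)) ∧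
    ∀ j : ℤ, LinearMap.range (f.f j) = LinearMap.ker (g.f j)

/-- The zero persistence module. -/
def zeroPM : PersMod k where
  V _ := PUnit
  map _ := 0
  map_id _ := LinearMap.ext fun _ => rfl
  map_comp _ _ := LinearMap.ext fun _ => rfl

section Aux

lemma PersMod.map_map (A : PersMod k) {a b c : ℤ} (h1 : a ≤ b) (h2 : b ≤ c) (x : A.V a) :
    A.map h2 (A.map h1 x) = A.map (h1.trans h2) x := by
  simpa using LinearMap.congr_fun (A.map_comp h1 h2) x

lemma Hom0.nat_apply {A B : PersMod k} (φ : Hom0 A B) {a b : ℤ} (h : a ≤ b) (x : A.V a) :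
    φ.f b (A.map h x) = B.map h (φ.f a x) := by
  simpa using LinearMap.congr_fun (φ.natural h) x

/-- If `t^{2ε}X = 0` then any structure map spanning at least `2ε` is zero. -/
lemma trivial_map_zero (X : PersMod k) (ε : ℕ) (hX : IsTrivial X ε)
    {a b : ℤ} (hab : a + 2 * (ε : ℤ) ≤ b) (h : a ≤ b) : X.map h = 0 := by
  have hcomp := X.map_comp (by omega : a ≤ a + 2 * (ε : ℤ)) (by omega : a + 2 * (ε : ℤ) ≤ b)
  rw [hX a, LinearMap.comp_zero] at hcomp
  exact hcomp.symm

/-- Descent of `P.map` along the surjection `g : P → N`. -/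
noncomputable def sigma {N P Y : PersMod k} (ε : ℕ)
    (j : Hom0 Y P) (g : Hom0 P N) (h₂ : IsShortExact j g) (hY : IsTrivial Y ε)
    (a b : ℤ) (hab : a + 2 * (ε : ℤ) ≤ b) :
    N.V a →ₗ[k] P.V b :=
  (Submodule.liftQ (LinearMap.ker (g.f a)) (P.map (by omega : a ≤ b)) (by
      rw [← h₂.2.2 a]
      rintro _ ⟨y, rfl⟩
      rw [LinearMap.mem_ker]
      have hnat := j.nat_apply (by omega : a ≤ b) y
      rw [trivial_map_zero Y ε hY hab] at hnat
      simp only [LinearMap.zero_apply] at hnat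
      rw [← hnat]
      exact map_zero _)).comp
    ((LinearMap.quotKerEquivOfSurjective (g.f a) (h₂.2.1 a)).symm : N.V a →ₗ[k] _)

lemma sigma_apply {N P Y : PersMod k} (ε : ℕ)
    (j : Hom0 Y P) (g : Hom0 P N) (h₂ : IsShortExact j g) (hY : IsTrivial Y ε)
    (a b : ℤ) (hab : a + 2 * (ε : ℤ) ≤ b) (p : P.V a) :
    sigma ε j g h₂ hY a b hab (g.f a p) = P.map (by omega : a ≤ b) p := by
  have hsymm : (LinearMap.quotKerEquivOfSurjective (g.f a) (h₂.2.1 a)).symm (g.f a p)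
      = Submodule.Quotient.mk p := by
    apply (LinearMap.quotKerEquivOfSurjective (g.f a) (h₂.2.1 a)).injective
    rw [LinearEquiv.apply_symm_apply]
    rfl
  simp only [sigma, LinearMap.comp_apply, LinearEquiv.coe_coe, hsymm]
  rfl

lemma sigma_g {N P Y : PersMod k} (ε : ℕ)
    (j : Hom0 Y P) (g : Hom0 P N) (h₂ : IsShortExact j g) (hY : IsTrivial Y ε)
    (a b : ℤ) (hab : a + 2 * (ε : ℤ) ≤ b) (n : N.V a) :
    g.f b (sigma ε j g h₂ hY a b hab n) = N.map (by omega : a ≤ b) n := by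
  obtain ⟨p, rfl⟩ := h₂.2.1 a n
  rw [sigma_apply]
  exact g.nat_apply _ p

lemma map_mem_range {M N X : PersMod k} (ε : ℕ)
    (i : Hom0 M N) (f : Hom0 N X) (h₁ : IsShortExact i f) (hX : IsTrivial X ε)
    (a b : ℤ) (hab : a + 2 * (ε : ℤ) ≤ b) (n : N.V a) :
    N.map (by omega : a ≤ b) n ∈ LinearMap.range (i.f b) := by
  rw [h₁.2.2 b, LinearMap.mem_ker]
  have hnat := f.nat_apply (by omega : a ≤ b) n
  rw [trivial_map_zero X ε hX hab] at hnat
  simpa using hnat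

/-- Lift of `N.map` along the injection `i : M → N`. -/
noncomputable def tau {M N X : PersMod k} (ε : ℕ)
    (i : Hom0 M N) (f : Hom0 N X) (h₁ : IsShortExact i f) (hX : IsTrivial X ε)
    (a b : ℤ) (hab : a + 2 * (ε : ℤ) ≤ b) :
    N.V a →ₗ[k] M.V b :=
  ((LinearEquiv.ofInjective (i.f b) (h₁.1 b)).symm : LinearMap.range (i.f b) →ₗ[k] M.V b).comp
    ((N.map (by omega : a ≤ b)).codRestrict (LinearMap.range (i.f b))
      (map_mem_range ε i f h₁ hX a b hab))

lemma tau_apply {M N X : PersMod k} (ε : ℕ)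
    (i : Hom0 M N) (f : Hom0 N X) (h₁ : IsShortExact i f) (hX : IsTrivial X ε)
    (a b : ℤ) (hab : a + 2 * (ε : ℤ) ≤ b) (n : N.V a) :
    i.f b (tau ε i f h₁ hX a b hab n) = N.map (by omega : a ≤ b) n := by
  simp only [tau, LinearMap.comp_apply, LinearEquiv.coe_coe, LinearMap.codRestrict_apply]
  have := congrArg Subtype.val
    ((LinearEquiv.ofInjective (i.f b) (h₁.1 b)).apply_symm_apply
      ⟨N.map (by omega : a ≤ b) n, map_mem_range ε i f h₁ hX a b hab n⟩)
  simpa using this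

end Aux

/-- If `M ⊑_{2ε} N` (via `0 → M → N → X → 0`, `t^{2ε}X = 0`) and
`P ⊒_{2ε} N` (via `0 → Y → P → N → 0`, `t^{2ε}Y = 0`), then `M` and `P` are
`2ε`-interleaved. -/
theorem left_right_mixed (M N P X Y : PersMod k) (ε : ℕ)
    (i : Hom0 M N) (f : Hom0 N X) (h₁ : IsShortExact i f) (hX : IsTrivial X ε)
    (j : Hom0 Y P) (g : Hom0 P N) (h₂ : IsShortExact j g) (hY : IsTrivial Y ε) :
    Nonempty (Interleaving M P (2 * ε)) := by
  classical
  set e : ℤ := ((2 * ε : ℕ) : ℤ) with he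
  have hee : ∀ a : ℤ, a + 2 * (ε : ℤ) ≤ a + e := by intro a; rw [he]; push_cast; omega
  refine ⟨⟨⟨fun a => (sigma ε j g h₂ hY a (a + e) (hee a)).comp (i.f a), ?_⟩,
          ⟨fun a => (tau ε i f h₁ hX a (a + e) (hee a)).comp (g.f a), ?_⟩, ?_, ?_⟩⟩
  · intro a b h
    ext m
    simp only [LinearMap.comp_apply]
    rw [i.nat_apply h m]
    obtain ⟨p, hp⟩ := h₂.2.1 a (i.f a m)
    rw [← hp, ← g.nat_apply h p, sigma_apply, sigma_apply]
    rw [P.map_map, P.map_map]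
  · intro a b h
    ext p
    simp only [LinearMap.comp_apply]
    rw [g.nat_apply h p]
    apply h₁.1 (b + e)
    rw [tau_apply, i.nat_apply (by omega : a + e ≤ b + e), tau_apply]
    rw [N.map_map, N.map_map]
  · intro a
    ext m
    simp only [LinearMap.comp_apply]
    rw [sigma_g]
    apply h₁.1 (a + e + e)
    rw [tau_apply, i.nat_apply (by omega : a ≤ a + e + e) m, N.map_map]
  · intro a
    ext p
    simp only [LinearMap.comp_apply]
    rw [tau_apply, ← g.nat_apply (by omega : a ≤ a + e) p, sigma_apply, P.map_map]
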